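/- arXiv:2403.04903 — 11 statements merged into one kernel-verified Lean document; each statement's English description precedes it below -/
import Mathlib

section
/- Let S be a commutative semiring and A a commutative S-algebra (with A a commutative semiring). Suppose that A, viewed as an S-semimodule, has no proper S-subsemimodule isomorphic to A, i.e., every S-submodule N of A with N ≃ₗ[S] A satisfies N = ⊤. Then every element of A is either a unit or multiplicatively non-cancellative (multiplication by it is not injective). -/
theorem LinearMap.surjective_of_injective_of_forall_equiv_eq_top {R M : Type*} [Semiring R]
    [AddCommMonoid M] [Module R M] (h : ∀ N : Submodule R M, Nonempty (N ≃ₗ[R] M) → N = ⊤)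
    {f : M →ₗ[R] M} (hf : Function.Injective f) : Function.Surjective f :=
  range_eq_top.mp (h _ ⟨(LinearEquiv.ofInjective f hf).symm⟩)

/-- If a commutative `S`-algebra `A` has no proper `S`-subsemimodule isomorphic to `A`,
then every element of `A` is either a unit or multiplicatively non-cancellative. -/
theorem stmt_1 {S A : Type*} [CommSemiring S] [CommSemiring A] [Algebra S A]
    (h : ∀ N : Submodule S A, Nonempty (N ≃ₗ[S] A) → N = ⊤) :
    ∀ a : A, IsUnit a ∨ ¬ Function.Injective (fun x : A => a * x) := by
  intro a
  refine or_iff_not_imp_right.mpr fun ha => ?_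
  obtain ⟨b, hb⟩ :=
    LinearMap.surjective_of_injective_of_forall_equiv_eq_top h (f := LinearMap.mulLeft S a)
      (not_not.mp ha) 1
  exact IsUnit.of_mul_eq_one b hb
end

section
/- Let S be a commutative semiring and A a commutative S-algebra (with A a commutative semiring). Suppose A is a Jónsson S-semimodule, i.e., for every S-submodule N of A with N ≠ ⊤, the cardinality of N is strictly less than the cardinality of A. Then every element of A is either a unit or multiplicatively non-cancellative (multiplication by it is not injective). -/
open Cardinal

theorem LinearMap.surjective_of_injective_of_jonsson {S M : Type*} [Semiring S]
    [AddCommMonoid M] [Module S M] (h : ∀ N : Submodule S M, N ≠ ⊤ → #N < #M)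
    {f : M →ₗ[S] M} (hf : Function.Injective f) : Function.Surjective f := by
  rw [← LinearMap.range_eq_top]
  by_contra hne
  have hcard : #(LinearMap.range f) = #M := by
    rw [← Cardinal.mk_range_eq f hf]
    rfl
  exact (h _ hne).ne hcard

/-- If a commutative `S`-algebra `A` is a Jónsson `S`-semimodule, then every element
of `A` is either a unit or multiplicatively non-cancellative. -/
theorem stmt_2 {S A : Type*} [CommSemiring S] [CommSemiring A] [Algebra S A]
    (h : ∀ N : Submodule S A, N ≠ ⊤ → Cardinal.mk N < Cardinal.mk A) :
    ∀ a : A, IsUnit a ∨ ¬ Function.Injective (fun x : A => a * x) := by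
  intro a
  rw [or_iff_not_imp_right, not_not]
  intro hinj
  obtain ⟨x, hx⟩ :=
    LinearMap.surjective_of_injective_of_jonsson h (f := LinearMap.mulLeft S a) hinj 1
  exact IsUnit.of_mul_eq_one x hx
end

section
/- Let R be a classical commutative ring (every element of R is either a unit or a zero-divisor) and let n be a natural number. Then the generalized dual number algebra over R with n nilpotent generators s_1,…,s_n satisfying s_i s_j = 0, realized as the trivial square-zero extension TrivSqZeroExt R (Fin n → R) of R by the module R^n, is a classical ring: every element is either a unit or a zero-divisor. -/
/-- If `R` is a classical commutative ring, then the generalized dual number algebra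
`TrivSqZeroExt R (Fin n → R)` over `R` is a classical ring. -/
theorem stmt_8 {R : Type*} [CommRing R]
    (h : ∀ r : R, IsUnit r ∨ ∃ b ≠ (0 : R), r * b = 0) (n : ℕ) :
    ∀ x : TrivSqZeroExt R (Fin n → R),
      IsUnit x ∨ ∃ y ≠ (0 : TrivSqZeroExt R (Fin n → R)), x * y = 0 := by
  intro x
  rcases h x.fst with hu | ⟨b, hb, hab⟩
  · left; exact TrivSqZeroExt.isUnit_iff_isUnit_fst.mpr hu
  · right
    rcases Nat.eq_zero_or_pos n with hn | hn
    · refine ⟨TrivSqZeroExt.inl b, fun hc => hb ?_, ?_⟩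
      · have := congrArg TrivSqZeroExt.fst hc
        simpa using this
      · ext
        · simpa using hab
        · subst hn
          next i => exact i.elim0
    · refine ⟨TrivSqZeroExt.inr (fun _ => b), fun hc => hb ?_, ?_⟩
      · have := congrArg (fun z : TrivSqZeroExt R (Fin n → R) => TrivSqZeroExt.snd z ⟨0, hn⟩) hc
        simpa using this
      · ext
        · simp
        · simp [TrivSqZeroExt.snd_mul, hab]
end

section
/- Let S be a commutative semiring in which every prime ideal is maximal (i.e., S has Krull dimension zero: for every ideal P of S, if P is prime then P is maximal). Then S is classical: every element of S is either a unit or a zero-divisor. -/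
/-- A commutative semiring of Krull dimension zero (every prime ideal is maximal)
is classical. -/
theorem stmt_10 {S : Type*} [CommSemiring S]
    (h : ∀ P : Ideal S, P.IsPrime → P.IsMaximal) :
    ∀ s : S, IsUnit s ∨ ∃ b ≠ (0 : S), s * b = 0 := by
  intro s
  by_cases hu : IsUnit s
  · exact Or.inl hu
  right
  have hnt : Nontrivial S := by
    by_contra hn
    rw [not_nontrivial_iff_subsingleton] at hn
    exact hu (Subsingleton.elim s 1 ▸ isUnit_one)
  obtain ⟨m, hm, hsub⟩ := Ideal.exists_le_maximal (Ideal.span {s})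
    (by rwa [Ne, Ideal.span_singleton_eq_top])
  have hsmem : s ∈ m := hsub (Ideal.mem_span_singleton_self s)
  have hone : (1 : S) ∉ m := fun h1 => hm.ne_top ((Ideal.eq_top_iff_one m).2 h1)
  have hprime : m.IsPrime := hm.isPrime
  by_contra hcon
  push_neg at hcon
  -- every x * s^n with x ∉ m is nonzero
  have key : ∀ (n : ℕ) (x : S), x ∉ m → x * s ^ n ≠ 0 := by
    intro n
    induction n with
    | zero => intro x hx hxe; simp at hxe; exact hx (hxe ▸ m.zero_mem)
    | succ k ih =>
      intro x hx hxe
      have hz : s * (x * s ^ k) = 0 := by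
        rw [show s * (x * s ^ k) = x * s ^ (k + 1) by ring]; exact hxe
      exact hcon _ (ih x hx) hz
  set T : Submonoid S :=
    { carrier := {y | ∃ x, x ∉ m ∧ ∃ n : ℕ, x * s ^ n = y}
      one_mem' := ⟨1, hone, 0, by simp⟩
      mul_mem' := by
        rintro a b ⟨x, hx, n, rfl⟩ ⟨y, hy, k, rfl⟩
        exact ⟨x * y, fun hxy => ((hprime.mem_or_mem hxy).elim hx hy),
          n + k, by ring⟩ } with hT
  have hsT : s ∈ T := ⟨1, hone, 1, by ring⟩
  have h0T : (0 : S) ∉ T := by rintro ⟨x, hx, n, hxe⟩; exact key n x hx hxe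
  -- localize at T
  letI L := Localization T
  have hLnt : Nontrivial L := by
    refine ⟨0, 1, fun he => ?_⟩
    have : (algebraMap S L) 0 = (algebraMap S L) 1 := by simpa using he
    obtain ⟨c, hc⟩ := (IsLocalization.eq_iff_exists T L).1 this
    simp at hc
    exact h0T (hc ▸ c.2)
  obtain ⟨M, hM⟩ := Ideal.exists_maximal L
  haveI := hM.isPrime
  set P := M.comap (algebraMap S L) with hP
  have hPprime : P.IsPrime := Ideal.IsPrime.comap _
  have hPm : ∀ t ∈ T, t ∉ P := by
    intro t ht htP
    exact hM.ne_top (Ideal.eq_top_of_isUnit_mem M htP (IsLocalization.map_units L ⟨t, ht⟩))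
  have hPle : P ≤ m := by
    intro y hy
    by_contra hym
    exact hPm y ⟨y, hym, 0, by simp⟩ hy
  have hsP : s ∉ P := hPm s hsT
  have := (h P hPprime).eq_of_le hm.ne_top hPle
  exact hsP (this ▸ hsmem)
end

section
/- Let S be a uniserial commutative semiring, i.e., the ideals of S are linearly ordered by inclusion: for all ideals I, J of S, either I ≤ J or J ≤ I. Then S is classical (every element is either a unit or a zero-divisor) if and only if for every b ∈ S the double annihilator of b equals the principal ideal generated by b, i.e., { t ∈ S : for all s ∈ S, s*b = 0 implies t*s = 0 } = Ideal.span {b} (as sets). -/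
open Ideal

section

variable {S : Type*} [CommSemiring S]

theorem dvd_total_of_ideal_total (huni : ∀ I J : Ideal S, I ≤ J ∨ J ≤ I) (x y : S) :
    x ∣ y ∨ y ∣ x := by
  rcases huni (span {y}) (span {x}) with h | h
  · exact .inl (mem_span_singleton.mp (h (mem_span_singleton_self y)))
  · exact .inr (mem_span_singleton.mp (h (mem_span_singleton_self x)))

theorem mul_eq_zero_of_dvd_of_mul_eq_zero {b s t : S} (hbt : b ∣ t) (hs : s * b = 0) :
    t * s = 0 := by
  obtain ⟨c, rfl⟩ := hbt
  rw [mul_right_comm, mul_comm b, hs, zero_mul]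

/-- Unless `b ∣ t` outright, `b = t * d`. A unit `d` gives `b ∣ t`; for a zero-divisor `d`,
say `d * e = 0` with `e ≠ 0`, comparing `t` with `e` either forces `b = 0` (if `e ∣ t`) or puts
the cofactor `c` of `e = t * c` in `Ann(b)`, so that `e = t * c = 0`. -/
theorem dvd_of_forall_mul_eq_zero (htotal : ∀ x y : S, x ∣ y ∨ y ∣ x)
    (hcl : ∀ a : S, IsUnit a ∨ ∃ e ≠ (0 : S), a * e = 0) {b t : S}
    (ht : ∀ s : S, s * b = 0 → t * s = 0) : b ∣ t := by
  obtain hbt | ⟨d, rfl⟩ := htotal b t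
  · exact hbt
  obtain hd | ⟨e, he, hde⟩ := hcl d
  · exact hd.mul_right_dvd.mpr dvd_rfl
  obtain ⟨c, rfl⟩ | ⟨f, rfl⟩ := htotal t e
  · refine absurd (ht c ?_) he
    rw [show c * (t * d) = d * (t * c) by ring, hde]
  · have hb : e * f * d = 0 := by rw [show e * f * d = f * (d * e) by ring, hde, mul_zero]
    have ht0 : e * f = 0 := by simpa using ht 1 (by rw [one_mul, hb])
    rw [ht0]
    exact dvd_zero _

theorem isUnit_or_exists_mul_eq_zero_of_doubleAnn_eq_span {a : S}
    (h : {t : S | ∀ s : S, s * a = 0 → t * s = 0} = ((span {a} : Ideal S) : Set S)) :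
    IsUnit a ∨ ∃ b ≠ (0 : S), a * b = 0 := by
  refine or_iff_not_imp_right.mpr fun hreg => ?_
  have hone : (1 : S) ∈ ((span {a} : Ideal S) : Set S) := by
    rw [← h]
    intro s hs
    rw [one_mul]
    by_contra hs0
    exact hreg ⟨s, hs0, by rwa [mul_comm]⟩
  exact isUnit_of_dvd_one (mem_span_singleton.mp hone)

end

/-- A uniserial commutative semiring `S` is classical if and only if
`Ann Ann (b) = (b)` for all `b ∈ S`. -/
theorem stmt_11 {S : Type*} [CommSemiring S]
    (huni : ∀ I J : Ideal S, I ≤ J ∨ J ≤ I) :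
    (∀ a : S, IsUnit a ∨ ∃ b ≠ (0 : S), a * b = 0) ↔
      (∀ b : S, {t : S | ∀ s : S, s * b = 0 → t * s = 0} =
        ((Ideal.span {b} : Ideal S) : Set S)) := by
  refine ⟨fun hcl b => ?_, fun h a => isUnit_or_exists_mul_eq_zero_of_doubleAnn_eq_span (h a)⟩
  ext t
  rw [Set.mem_ofPred_eq, SetLike.mem_coe, mem_span_singleton]
  exact ⟨dvd_of_forall_mul_eq_zero (dvd_total_of_ideal_total huni) hcl,
    fun hbt _ => mul_eq_zero_of_dvd_of_mul_eq_zero hbt⟩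
end

section
/- Let S be a commutative semiring and M an S-semimodule whose additive monoid is a group (M is an additive commutative group with an S-module structure). If S is classical (every element of S is either a unit or a zero-divisor), then the expectation semiring S ⊕̃ M, realized as the trivial square-zero extension TrivSqZeroExt S M, is also classical: every element of TrivSqZeroExt S M is either a unit or a zero-divisor. -/
/-- The right-module structure on `M` induced by the left one, so that the expectation
semiring `S ⊕̃ M` can be realized as `TrivSqZeroExt S M`. -/
instance expectationOpModule {S M : Type*} [CommSemiring S] [AddCommGroup M]
    [Module S M] : Module Sᵐᵒᵖ M :=
  Module.compHom M ((RingHom.id S).fromOpposite mul_comm)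

instance expectationSMulCommClass {S M : Type*} [CommSemiring S] [AddCommGroup M]
    [Module S M] : SMulCommClass S Sᵐᵒᵖ M :=
  ⟨fun s t m => by show s • (t.unop • m) = t.unop • (s • m); rw [smul_comm]⟩

/-- If `S` is a classical commutative semiring and `M` an `S`-semimodule whose additive
monoid is a group, then the expectation semiring `S ⊕̃ M = TrivSqZeroExt S M` is
classical. -/
theorem stmt_12 {S M : Type*} [CommSemiring S] [AddCommGroup M] [Module S M]
    (h : ∀ s : S, IsUnit s ∨ ∃ b ≠ (0 : S), s * b = 0) :
    ∀ x : TrivSqZeroExt S M, IsUnit x ∨ ∃ y ≠ (0 : TrivSqZeroExt S M), x * y = 0 := by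
  intro x
  rcases h x.fst with hu | ⟨b, hb, hsb⟩
  · exact Or.inl (TrivSqZeroExt.isUnit_iff_isUnit_fst.mpr hu)
  · right
    by_cases hbm : b • x.snd = 0
    · refine ⟨TrivSqZeroExt.inl b, ?_, ?_⟩
      · intro hc
        apply hb
        simpa using congr_arg TrivSqZeroExt.fst hc
      · ext
        · simp [hsb]
        · show x.fst • (TrivSqZeroExt.inl b : TrivSqZeroExt S M).snd
            + MulOpposite.op b • x.snd = 0
          show x.fst • (0 : M) + b • x.snd = 0
          simp [hbm]
    · refine ⟨TrivSqZeroExt.inr (b • x.snd), ?_, ?_⟩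
      · intro hc
        apply hbm
        simpa using congr_arg TrivSqZeroExt.snd hc
      · ext
        · simp
        · show x.fst • (b • x.snd) + MulOpposite.op (0 : S) • x.snd = 0
          rw [smul_smul, hsb, zero_smul]
          show (0 : M) + (0 : S) • x.snd = 0
          rw [zero_smul, add_zero]
end

section
/- Let S be a commutative semiring, MC(S) the submonoid of multiplicatively cancellative elements of S, and Q a commutative semiring with an S-algebra structure such that Q is a localization of S at MC(S) (IsLocalization MC(S) Q). Then: (1) the canonical map algebraMap S Q is injective, so S embeds as a subsemiring of Q; and (2) if S is classical (every element of S is either a unit or a zero-divisor), then the canonical map algebraMap S Q is surjective, hence bijective, so S = Q(S). -/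
/-- The submonoid of multiplicatively cancellative elements of a commutative
semiring `S`. -/
def MC (S : Type*) [CommSemiring S] : Submonoid S where
  carrier := {s : S | ∀ x y : S, s * x = s * y → x = y}
  one_mem' := fun x y h => by simpa using h
  mul_mem' := by
    intro a b ha hb x y h
    apply hb
    apply ha
    rw [← mul_assoc, ← mul_assoc]
    exact h

/-- For the total quotient semiring `Q = Q(S)` (the localization of `S` at `MC(S)`):
(1) `S` embeds in `Q`, i.e., `algebraMap S Q` is injective; and
(2) if `S` is classical, then `algebraMap S Q` is surjective, hence bijective,
so `S = Q(S)`. -/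
theorem stmt_14 {S Q : Type*} [CommSemiring S] [CommSemiring Q] [Algebra S Q]
    [IsLocalization (MC S) Q] :
    Function.Injective (algebraMap S Q) ∧
    ((∀ s : S, IsUnit s ∨ ∃ b ≠ (0 : S), s * b = 0) →
      Function.Bijective (algebraMap S Q)) := by
  have hinj : Function.Injective (algebraMap S Q) := by
    intro x y h
    obtain ⟨c, hc⟩ := IsLocalization.exists_of_eq (M := MC S) (S := Q) h
    exact c.2 x y hc
  refine ⟨hinj, fun hcl => ⟨hinj, fun q => ?_⟩⟩
  obtain ⟨⟨x, s⟩, hxs⟩ := IsLocalization.surj (MC S) q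
  dsimp only at hxs
  rcases hcl s with hu | ⟨b, hb0, hb⟩
  · obtain ⟨u, hu⟩ := hu
    refine ⟨x * ↑u⁻¹, ?_⟩
    have hs : algebraMap S Q (s : S) * algebraMap S Q (↑u⁻¹ : S) = 1 := by
      rw [← map_mul, ← hu, Units.mul_inv, map_one]
    calc algebraMap S Q (x * ↑u⁻¹) = q * algebraMap S Q s * algebraMap S Q (↑u⁻¹ : S) := by
          rw [map_mul, ← hxs]
      _ = q := by rw [mul_assoc, hs, mul_one]
  · exact absurd (s.2 b 0 (by simpa using hb)) hb0
end

section
/- Let S be a commutative semiring and let Id(S) denote the semiring of ideals of S (with ideal addition and ideal multiplication). Then: (1) if Id(S) is classical (every ideal, as an element of the semiring Id(S), is either a unit or a zero-divisor), then S is classical; and (2) if S is classical and S is a principal ideal semiring (every ideal of S is principal), then Id(S) is classical. -/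
/-- For a commutative semiring `S` and its semiring of ideals `Id(S)`:
(1) if `Id(S)` is classical then so is `S`; and
(2) if `S` is classical and a principal ideal semiring, then `Id(S)` is classical. -/
theorem stmt_15 {S : Type*} [CommSemiring S] :
    ((∀ I : Ideal S, IsUnit I ∨ ∃ J ≠ (0 : Ideal S), I * J = 0) →
      ∀ s : S, IsUnit s ∨ ∃ b ≠ (0 : S), s * b = 0) ∧
    ((∀ s : S, IsUnit s ∨ ∃ b ≠ (0 : S), s * b = 0) →
      (∀ I : Ideal S, Submodule.IsPrincipal I) →
      ∀ I : Ideal S, IsUnit I ∨ ∃ J ≠ (0 : Ideal S), I * J = 0) := by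
  constructor
  · intro h s
    rcases h (Ideal.span {s}) with hu | ⟨J, hJ, hmul⟩
    · left
      rw [Ideal.isUnit_iff, Ideal.span_singleton_eq_top] at hu
      exact hu
    · right
      obtain ⟨b, hbJ, hb⟩ := Submodule.exists_mem_ne_zero_of_ne_bot hJ
      refine ⟨b, hb, ?_⟩
      have : s * b ∈ Ideal.span {s} * J :=
        Ideal.mul_mem_mul (Ideal.mem_span_singleton_self s) hbJ
      rw [hmul] at this
      exact this
  · intro h hp I
    obtain ⟨s, rfl⟩ := hp I
    rcases h s with hu | ⟨b, hb, hsb⟩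
    · left
      rw [Ideal.isUnit_iff, Ideal.submodule_span_eq, Ideal.span_singleton_eq_top]
      exact hu
    · right
      refine ⟨Ideal.span {b}, ?_, ?_⟩
      · simpa [Ideal.span_singleton_eq_bot] using hb
      · rw [Ideal.submodule_span_eq, Ideal.span_singleton_mul_span_singleton, hsb,
          Ideal.span_singleton_eq_bot.mpr rfl]
        rfl
end

section
/- Let K be a field, σ an index set, and for each i ∈ σ let m i be a positive integer. Let I be the ideal of the polynomial ring K[x_i : i ∈ σ] generated by the powers x_i^{m i}, i.e., I = Ideal.span (Set.range (fun i => X i ^ m i)) in MvPolynomial σ K. Then the quotient ring MvPolynomial σ K ⧸ I is completely primary: every element of the quotient is either a unit or nilpotent. -/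
open MvPolynomial in
/-- If `K` is a field and `I = (X i ^ m i : i ∈ σ)` with each `m i > 0`, then the
quotient `K[X i : i ∈ σ] ⧸ I` is completely primary: every element is either a unit
or nilpotent. -/
theorem stmt_16 {K : Type*} [Field K] {σ : Type*} (m : σ → ℕ) (hm : ∀ i, 0 < m i) :
    ∀ x : MvPolynomial σ K ⧸
        Ideal.span (Set.range fun i => (X i : MvPolynomial σ K) ^ m i),
      IsUnit x ∨ ∃ n : ℕ, 0 < n ∧ x ^ n = 0 := by
  set I : Ideal (MvPolynomial σ K) :=
    Ideal.span (Set.range fun i => (X i : MvPolynomial σ K) ^ m i) with hI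
  have hXnil : ∀ i : σ, IsNilpotent (Ideal.Quotient.mk I (X i)) := by
    intro i
    refine ⟨m i, ?_⟩
    rw [← map_pow, Ideal.Quotient.eq_zero_iff_mem]
    exact Ideal.subset_span ⟨i, rfl⟩
  -- any polynomial with zero constant coefficient is nilpotent mod I
  have hnil : ∀ p : MvPolynomial σ K, coeff 0 p = 0 →
      IsNilpotent (Ideal.Quotient.mk I p) := by
    intro p hp
    have hmem : p ∈ Ideal.span (MvPolynomial.X '' (Set.univ : Set σ) :
        Set (MvPolynomial σ K)) := by
      rw [mem_ideal_span_X_image]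
      intro d hd
      by_contra h
      push_neg at h
      have hd0 : d = 0 := by
        ext i
        simpa using h i (Set.mem_univ i)
      rw [mem_support_iff, hd0] at hd
      exact hd hp
    have : Ideal.span (MvPolynomial.X '' (Set.univ : Set σ) : Set (MvPolynomial σ K))
        ≤ (nilradical _).comap (Ideal.Quotient.mk I) := by
      rw [Ideal.span_le]
      rintro _ ⟨i, -, rfl⟩
      exact hXnil i
    exact this hmem
  intro x
  obtain ⟨p, rfl⟩ := Ideal.Quotient.mk_surjective x
  by_cases hc : coeff 0 p = 0
  · obtain ⟨n, hn⟩ := hnil p hc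
    exact Or.inr ⟨n + 1, Nat.succ_pos n, by rw [pow_succ', hn, mul_zero]⟩
  · left
    have h1 : IsUnit (Ideal.Quotient.mk I (C (coeff 0 p))) :=
      ((isUnit_iff_ne_zero.mpr hc).map (C : K →+* MvPolynomial σ K)).map
        (Ideal.Quotient.mk I)
    have h2 : IsNilpotent (Ideal.Quotient.mk I (p - C (coeff 0 p))) := by
      refine hnil _ ?_
      simp
    have := h2.isUnit_add_right_of_commute h1 (Commute.all _ _)
    have heq : Ideal.Quotient.mk I (C (coeff 0 p)) +
        Ideal.Quotient.mk I (p - C (coeff 0 p)) = Ideal.Quotient.mk I p := by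
      rw [← RingHom.map_add]; ring_nf
    rwa [add_comm, heq] at this
end

section
/- Let S be a commutative semiring and M an S-semimodule whose additive monoid is a group (M is an additive commutative group with an S-module structure). Then S is completely primary (every element of S is either a unit or nilpotent) if and only if the expectation semiring S ⊕̃ M, realized as the trivial square-zero extension TrivSqZeroExt S M, is completely primary (every element of TrivSqZeroExt S M is either a unit or nilpotent). -/
instance expectationCentral {S M : Type*} [CommSemiring S] [AddCommGroup M]
    [Module S M] : IsCentralScalar S M :=
  ⟨fun _ _ => rfl⟩

/-- For a commutative semiring `S` and an `S`-semimodule `M` whose additive monoid is a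
group, `S` is completely primary iff the expectation semiring `S ⊕̃ M = TrivSqZeroExt S M`
is completely primary. -/
theorem stmt_17 {S M : Type*} [CommSemiring S] [AddCommGroup M] [Module S M] :
    (∀ s : S, IsUnit s ∨ ∃ n : ℕ, 0 < n ∧ s ^ n = 0) ↔
    (∀ x : TrivSqZeroExt S M,
      IsUnit x ∨ ∃ n : ℕ, 0 < n ∧ x ^ n = 0) := by
  constructor
  · intro h x
    rcases h x.fst with hu | ⟨n, hn, hs⟩
    · exact Or.inl (TrivSqZeroExt.isUnit_iff_isUnit_fst.mpr hu)
    · refine Or.inr ⟨n + 1, n.succ_pos, ?_⟩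
      ext
      · rw [TrivSqZeroExt.fst_pow, pow_succ, hs, zero_mul, TrivSqZeroExt.fst_zero]
      · rw [TrivSqZeroExt.snd_pow, Nat.pred_succ, hs, zero_smul, smul_zero,
          TrivSqZeroExt.snd_zero]
  · intro h s
    rcases h (TrivSqZeroExt.inl s) with hu | ⟨n, hn, hx⟩
    · exact Or.inl (TrivSqZeroExt.isUnit_inl_iff.mp hu)
    · refine Or.inr ⟨n, hn, ?_⟩
      have := congrArg TrivSqZeroExt.fst hx
      rwa [TrivSqZeroExt.fst_pow, TrivSqZeroExt.fst_inl, TrivSqZeroExt.fst_zero] at this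
end

section
/- Let S be a commutative semiring and let Id(S) denote the semiring of ideals of S (with ideal addition and ideal multiplication). Then: (1) if Id(S) is completely primary (every ideal, as an element of the semiring Id(S), is either a unit or nilpotent), then S is completely primary; and (2) if S is completely primary and S is a principal ideal semiring (every ideal of S is principal), then Id(S) is completely primary. -/
/-! A principal ideal `(s)` is the unit ideal exactly when `s` is a unit, and `(s)^n = (s^n)`
vanishes exactly when `s^n = 0`; so the dichotomy "unit or nilpotent" transfers between `s`
and `(s)` in both directions. Part (1) applies this to the ideals `(s)`; part (2) to the
generator of an arbitrary (principal) ideal. -/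

namespace Ideal

variable {S : Type*} [CommSemiring S]

theorem isUnit_span_singleton_iff {s : S} : IsUnit (span {s}) ↔ IsUnit s := by
  rw [isUnit_iff, span_singleton_eq_top]

theorem span_singleton_pow_eq_zero_iff {s : S} {n : ℕ} :
    span {s} ^ n = 0 ↔ s ^ n = 0 := by
  rw [span_singleton_pow, zero_eq_bot, span_singleton_eq_bot]

theorem isUnit_or_pow_eq_zero_span_singleton_iff {s : S} :
    (IsUnit (span {s}) ∨ ∃ n : ℕ, 0 < n ∧ span {s} ^ n = 0) ↔
      (IsUnit s ∨ ∃ n : ℕ, 0 < n ∧ s ^ n = 0) := by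
  simp only [isUnit_span_singleton_iff, span_singleton_pow_eq_zero_iff]

end Ideal

/-- For a commutative semiring `S` and its semiring of ideals `Id(S)`:
(1) if `Id(S)` is completely primary then so is `S`; and
(2) if `S` is completely primary and a principal ideal semiring, then `Id(S)` is
completely primary. -/
theorem stmt_19 {S : Type*} [CommSemiring S] :
    ((∀ I : Ideal S, IsUnit I ∨ ∃ n : ℕ, 0 < n ∧ I ^ n = (0 : Ideal S)) →
      ∀ s : S, IsUnit s ∨ ∃ n : ℕ, 0 < n ∧ s ^ n = 0) ∧
    ((∀ s : S, IsUnit s ∨ ∃ n : ℕ, 0 < n ∧ s ^ n = 0) →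
      (∀ I : Ideal S, Submodule.IsPrincipal I) →
      ∀ I : Ideal S, IsUnit I ∨ ∃ n : ℕ, 0 < n ∧ I ^ n = (0 : Ideal S)) := by
  refine ⟨fun hIdeals s => ?_, fun hS hPrincipal I => ?_⟩
  · exact Ideal.isUnit_or_pow_eq_zero_span_singleton_iff.mp (hIdeals (Ideal.span {s}))
  · obtain ⟨s, rfl⟩ := hPrincipal I
    exact Ideal.isUnit_or_pow_eq_zero_span_singleton_iff.mpr (hS s)
end
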